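/- (Theorem 3(b), quantitative version.) Let Y and X_0, …, X_n be jointly distributed random variables with each X_k valued in a common finite set 𝒳, and let Ỹ and X̃_0, …, X̃_n be another jointly distributed family on the same sets. Suppose |L(y,a)| ≤ M for all y and a, I_{χ²}(Y; X_{k+1} | X_k) ≤ ε² for every k < n, and D_{χ²}(P_{Y|X_δ = x} || P_{Ỹ|X̃_δ = x}) ≤ β² for every δ ≤ n and every x with P_{X_δ}(x) > 0. Then for all 0 ≤ δ₁ ≤ δ₂ ≤ n, H_L(Y; Ỹ | X_{δ₁}) ≤ H_L(Y; Ỹ | X_{δ₂}) + 2Mβ + 2M(δ₂ − δ₁)ε·|𝒳|. -/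
import Mathlib


open Finset

open Classical in
/-- Probability of an event under a pmf `p` on a finite sample space. -/
noncomputable def pr {Ω : Type*} [Fintype Ω] (p : Ω → ℝ) (E : Ω → Prop) : ℝ :=
  ∑ ω, if E ω then p ω else 0

/-- Conditional distribution of a random variable `Y` given an event `E`. -/
noncomputable def condDist {Ω 𝒴 : Type*} [Fintype Ω] (p : Ω → ℝ) (Y : Ω → 𝒴)
    (E : Ω → Prop) : 𝒴 → ℝ :=
  fun y => pr p (fun ω => Y ω = y ∧ E ω) / pr p E

/-- Neyman's χ²-divergence `D_{χ²}(P‖Q)`.  (In Lean, `x / 0 = 0`, which realizes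
the convention `0²/0 = 0` under absolute continuity.) -/
noncomputable def chiSqDiv {𝒴 : Type*} [Fintype 𝒴] (P Q : 𝒴 → ℝ) : ℝ :=
  ∑ y, (P y - Q y) ^ 2 / Q y

/-- χ²-conditional mutual information `I_{χ²}(Y;Z|X)`. -/
noncomputable def chiSqCMI {Ω 𝒳 𝒴 𝒵 : Type*} [Fintype Ω] [Fintype 𝒳] [Fintype 𝒴]
    [Fintype 𝒵] (p : Ω → ℝ) (Y : Ω → 𝒴) (Z : Ω → 𝒵) (X : Ω → 𝒳) : ℝ :=
  ∑ x, ∑ z, pr p (fun ω => X ω = x ∧ Z ω = z) *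
    chiSqDiv (condDist p Y (fun ω => X ω = x ∧ Z ω = z))
      (condDist p Y (fun ω => X ω = x))

/-- Expected loss `E_{Y∼P}[L(Y,a)]`. -/
noncomputable def expLoss {𝒴 𝒜 : Type*} [Fintype 𝒴] (L : 𝒴 → 𝒜 → ℝ) (P : 𝒴 → ℝ)
    (a : 𝒜) : ℝ :=
  ∑ y, P y * L y a

/-- The `L`-entropy `H_L(P) = min_{a∈𝒜} E_{Y∼P}[L(Y,a)]`. -/
noncomputable def Lentropy {𝒴 𝒜 : Type*} [Fintype 𝒴] (L : 𝒴 → 𝒜 → ℝ) (P : 𝒴 → ℝ) : ℝ :=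
  ⨅ a : 𝒜, expLoss L P a

/-- The `L`-conditional entropy `H_L(Y|X) = Σ_x P_X(x) H_L(P_{Y|X=x})`. -/
noncomputable def LcondEntropy {Ω 𝒳 𝒴 𝒜 : Type*} [Fintype Ω] [Fintype 𝒳] [Fintype 𝒴]
    (L : 𝒴 → 𝒜 → ℝ) (p : Ω → ℝ) (Y : Ω → 𝒴) (X : Ω → 𝒳) : ℝ :=
  ∑ x, pr p (fun ω => X ω = x) * Lentropy L (condDist p Y (fun ω => X ω = x))

/-- `b` selects, for every probability mass function `P` on `𝒴`, a Bayes action `b P`. -/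
def IsBayesSelector {𝒴 𝒜 : Type*} [Fintype 𝒴] (L : 𝒴 → 𝒜 → ℝ) (b : (𝒴 → ℝ) → 𝒜) : Prop :=
  ∀ P : 𝒴 → ℝ, (∀ y, 0 ≤ P y) → (∑ y, P y) = 1 →
    ∀ a : 𝒜, expLoss L P (b P) ≤ expLoss L P a

/-- The `L`-divergence `D_L(P‖Q) = E_{Y∼P}[L(Y,a_Q)] − E_{Y∼P}[L(Y,a_P)]`
for the choice `a_P = b P`, `a_Q = b Q` of Bayes actions. -/
noncomputable def Ldiv {𝒴 𝒜 : Type*} [Fintype 𝒴] (L : 𝒴 → 𝒜 → ℝ) (b : (𝒴 → ℝ) → 𝒜)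
    (P Q : 𝒴 → ℝ) : ℝ :=
  expLoss L P (b Q) - expLoss L P (b P)

/-- The `L`-conditional cross entropy
`H_L(Y;Ỹ|X) = Σ_x P_X(x) E_{Y∼P_{Y|X=x}}[L(Y, a_{P̃_{Ỹ|X̃=x}})]`. -/
noncomputable def LcrossEntropy {Ω Ω' 𝒳 𝒴 𝒜 : Type*} [Fintype Ω] [Fintype Ω']
    [Fintype 𝒳] [Fintype 𝒴] (L : 𝒴 → 𝒜 → ℝ) (b : (𝒴 → ℝ) → 𝒜)
    (p : Ω → ℝ) (Y : Ω → 𝒴) (X : Ω → 𝒳)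
    (p' : Ω' → ℝ) (Y' : Ω' → 𝒴) (X' : Ω' → 𝒳) : ℝ :=
  ∑ x, pr p (fun ω => X ω = x) *
    expLoss L (condDist p Y (fun ω => X ω = x))
      (b (condDist p' Y' (fun ω => X' ω = x)))

set_option linter.unusedSectionVars false
set_option linter.unusedVariables false

section PR
variable {Ω : Type*} [Fintype Ω] {p : Ω → ℝ}

lemma pr_nonneg (hp : ∀ ω, 0 ≤ p ω) (E : Ω → Prop) : 0 ≤ pr p E := by
  refine Finset.sum_nonneg fun ω _ => ?_
  split
  · exact hp ω
  · exact le_refl _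

lemma pr_mono (hp : ∀ ω, 0 ≤ p ω) {E F : Ω → Prop} (h : ∀ ω, E ω → F ω) :
    pr p E ≤ pr p F := by
  classical
  refine Finset.sum_le_sum fun ω _ => ?_
  by_cases hE : E ω
  · simp [hE, h ω hE]
  · simp only [hE, if_false]
    split
    · exact hp ω
    · exact le_refl _

lemma pr_congr {E F : Ω → Prop} (h : ∀ ω, E ω ↔ F ω) : pr p E = pr p F := by
  classical
  unfold pr
  exact Finset.sum_congr rfl fun ω _ => if_congr (h ω) rfl rfl

lemma pr_split {𝒵 : Type*} [Fintype 𝒵] (E : Ω → Prop) (Z : Ω → 𝒵) :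
    pr p E = ∑ z, pr p (fun ω => E ω ∧ Z ω = z) := by
  classical
  unfold pr
  rw [Finset.sum_comm]
  refine Finset.sum_congr rfl fun ω _ => ?_
  by_cases hE : E ω
  · simp [hE]
  · simp [hE]

lemma pr_true (hsum : ∑ ω, p ω = 1) : pr p (fun _ => True) = 1 := by
  unfold pr; simpa using hsum

lemma sum_pr_fiber {𝒵 : Type*} [Fintype 𝒵] (hsum : ∑ ω, p ω = 1) (Z : Ω → 𝒵) :
    ∑ z, pr p (fun ω => Z ω = z) = 1 := by
  have h := pr_split (p := p) (fun _ => True) Z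
  rw [pr_true hsum] at h
  rw [h]
  exact Finset.sum_congr rfl fun z _ => pr_congr fun ω => by simp

end PR

section CD
variable {Ω 𝒴 : Type*} [Fintype Ω] [Fintype 𝒴] {p : Ω → ℝ}

lemma condDist_nonneg (hp : ∀ ω, 0 ≤ p ω) (Y : Ω → 𝒴) (E : Ω → Prop) (y : 𝒴) :
    0 ≤ condDist p Y E y :=
  div_nonneg (pr_nonneg hp _) (pr_nonneg hp _)

lemma condDist_mul_pr (hp : ∀ ω, 0 ≤ p ω) (Y : Ω → 𝒴) (E : Ω → Prop) (y : 𝒴) :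
    condDist p Y E y * pr p E = pr p (fun ω => Y ω = y ∧ E ω) := by
  rcases eq_or_lt_of_le (pr_nonneg hp E) with h | h
  · have h0 : pr p (fun ω => Y ω = y ∧ E ω) = 0 :=
      le_antisymm (h ▸ pr_mono hp fun ω hw => hw.2) (pr_nonneg hp _)
    simp [condDist, ← h, h0]
  · rw [condDist, div_mul_cancel₀ _ (ne_of_gt h)]

lemma sum_condDist (hp : ∀ ω, 0 ≤ p ω) (Y : Ω → 𝒴) {E : Ω → Prop}
    (hE : 0 < pr p E) : ∑ y, condDist p Y E y = 1 := by
  have h : pr p E = ∑ y, pr p fun ω => Y ω = y ∧ E ω :=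
    (pr_split E Y).trans (Finset.sum_congr rfl fun y _ => pr_congr fun ω => and_comm)
  simp only [condDist, ← Finset.sum_div, ← h, div_self (ne_of_gt hE)]

lemma sum_condDist_le_one (hp : ∀ ω, 0 ≤ p ω) (Y : Ω → 𝒴) (E : Ω → Prop) :
    ∑ y, condDist p Y E y ≤ 1 := by
  rcases eq_or_lt_of_le (pr_nonneg hp E) with h | h
  · simp [condDist, ← h]
  · exact le_of_eq (sum_condDist hp Y h)

end CD

section ENT
variable {𝒴 𝒜 : Type*} [Fintype 𝒴] [Fintype 𝒜] [Nonempty 𝒜]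

lemma Lentropy_le_expLoss (L : 𝒴 → 𝒜 → ℝ) (P : 𝒴 → ℝ) (a : 𝒜) :
    Lentropy L P ≤ expLoss L P a :=
  ciInf_le (Set.Finite.bddBelow (Set.finite_range _)) a

lemma expLoss_bayes_le {L : 𝒴 → 𝒜 → ℝ} {b : (𝒴 → ℝ) → 𝒜} (hb : IsBayesSelector L b)
    {P : 𝒴 → ℝ} (h0 : ∀ y, 0 ≤ P y) (h1 : ∑ y, P y = 1) :
    expLoss L P (b P) ≤ Lentropy L P :=
  le_ciInf fun a => hb P h0 h1 a

lemma abs_expLoss_sub (L : 𝒴 → 𝒜 → ℝ) {M : ℝ} (hL : ∀ y a, |L y a| ≤ M)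
    (P Q : 𝒴 → ℝ) (a : 𝒜) :
    |expLoss L P a - expLoss L Q a| ≤ M * ∑ y, |P y - Q y| := by
  rw [expLoss, expLoss, ← Finset.sum_sub_distrib]
  calc |∑ y, (P y * L y a - Q y * L y a)| ≤ ∑ y, |P y - Q y| * M := by
        refine (Finset.abs_sum_le_sum_abs _ _).trans (Finset.sum_le_sum fun y _ => ?_)
        rw [← sub_mul, abs_mul]
        exact mul_le_mul_of_nonneg_left (hL y a) (abs_nonneg _)
    _ = M * ∑ y, |P y - Q y| := by rw [← Finset.sum_mul, mul_comm]

lemma l1_le_sqrt_chiSq {P Q : 𝒴 → ℝ} (hQ0 : ∀ y, 0 ≤ Q y)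
    (hQ1 : ∑ y, Q y ≤ 1) (hac : ∀ y, Q y = 0 → P y = 0) :
    ∑ y, |P y - Q y| ≤ Real.sqrt (chiSqDiv P Q) := by
  have hchi : 0 ≤ chiSqDiv P Q :=
    Finset.sum_nonneg fun y _ => div_nonneg (sq_nonneg _) (hQ0 y)
  have key : ∑ y, |P y - Q y| = ∑ y, Real.sqrt (Q y) * (|P y - Q y| / Real.sqrt (Q y)) := by
    refine Finset.sum_congr rfl fun y _ => ?_
    rcases eq_or_lt_of_le (hQ0 y) with h | h
    · simp [← h, hac y h.symm]
    · rw [mul_comm, div_mul_cancel₀ _ (Real.sqrt_ne_zero'.mpr h)]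
  rw [key]
  have cs := Real.sum_mul_le_sqrt_mul_sqrt Finset.univ
    (fun y => Real.sqrt (Q y)) (fun y => |P y - Q y| / Real.sqrt (Q y))
  refine cs.trans ?_
  have e1 : ∑ y, Real.sqrt (Q y) ^ 2 = ∑ y, Q y :=
    Finset.sum_congr rfl fun y _ => Real.sq_sqrt (hQ0 y)
  have e2 : ∑ y, (|P y - Q y| / Real.sqrt (Q y)) ^ 2 = chiSqDiv P Q := by
    refine Finset.sum_congr rfl fun y _ => ?_
    rw [div_pow, sq_abs, Real.sq_sqrt (hQ0 y)]
  rw [e1, e2]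
  calc Real.sqrt (∑ y, Q y) * Real.sqrt (chiSqDiv P Q)
      ≤ 1 * Real.sqrt (chiSqDiv P Q) := by
        refine mul_le_mul_of_nonneg_right ?_ (Real.sqrt_nonneg _)
        rw [show (1:ℝ) = Real.sqrt 1 by simp]
        exact Real.sqrt_le_sqrt hQ1
    _ = Real.sqrt (chiSqDiv P Q) := one_mul _

end ENT

section MAIN

lemma chiSqDiv_nonneg {𝒴 : Type*} [Fintype 𝒴] {P Q : 𝒴 → ℝ} (hQ : ∀ y, 0 ≤ Q y) :
    0 ≤ chiSqDiv P Q :=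
  Finset.sum_nonneg fun y _ => div_nonneg (sq_nonneg _) (hQ y)

lemma expLoss_b_le {𝒴 𝒜 : Type*} [Fintype 𝒴] [Fintype 𝒜] [Nonempty 𝒜]
    {L : 𝒴 → 𝒜 → ℝ} {M : ℝ} (hL : ∀ y a, |L y a| ≤ M)
    {b : (𝒴 → ℝ) → 𝒜} (hb : IsBayesSelector L b)
    {P Q : 𝒴 → ℝ} (hP0 : ∀ y, 0 ≤ P y) (hP1 : ∑ y, P y = 1)
    (hQ0 : ∀ y, 0 ≤ Q y) (hQ1 : ∑ y, Q y = 1) :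
    expLoss L P (b Q) ≤ Lentropy L P + 2 * M * ∑ y, |P y - Q y| := by
  have h1 : expLoss L P (b Q) - expLoss L Q (b Q) ≤ M * ∑ y, |P y - Q y| :=
    (le_abs_self _).trans (abs_expLoss_sub L hL P Q _)
  have h2 : expLoss L Q (b Q) ≤ expLoss L Q (b P) := hb Q hQ0 hQ1 _
  have h3 : expLoss L Q (b P) - expLoss L P (b P) ≤ M * ∑ y, |P y - Q y| := by
    have h := (le_abs_self _).trans (abs_expLoss_sub L hL Q P (b P))
    have e : ∑ y, |Q y - P y| = ∑ y, |P y - Q y| :=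
      Finset.sum_congr rfl fun y _ => abs_sub_comm _ _
    rwa [e] at h
  have h4 : expLoss L P (b P) ≤ Lentropy L P := expLoss_bayes_le hb hP0 hP1
  linarith

lemma stepA {Ω Ω' 𝒳 𝒴 𝒜 : Type*} [Fintype Ω] [Fintype Ω'] [Fintype 𝒳] [Fintype 𝒴]
    [Fintype 𝒜] [Nonempty 𝒜]
    {L : 𝒴 → 𝒜 → ℝ} {M : ℝ} (hL : ∀ y a, |L y a| ≤ M) (hM : 0 ≤ M)
    {b : (𝒴 → ℝ) → 𝒜} (hb : IsBayesSelector L b)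
    {p : Ω → ℝ} (hp : ∀ ω, 0 ≤ p ω) (hsum : ∑ ω, p ω = 1)
    (Y : Ω → 𝒴) (V : Ω → 𝒳)
    {p' : Ω' → ℝ} (hp' : ∀ ω, 0 ≤ p' ω)
    (Y' : Ω' → 𝒴) (V' : Ω' → 𝒳)
    {β : ℝ} (hβ : 0 ≤ β)
    (hsupp : ∀ x, 0 < pr p (fun ω => V ω = x) → 0 < pr p' (fun ω => V' ω = x))
    (hac : ∀ x, 0 < pr p (fun ω => V ω = x) → ∀ y,
      condDist p' Y' (fun ω => V' ω = x) y = 0 → condDist p Y (fun ω => V ω = x) y = 0)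
    (hchi : ∀ x, 0 < pr p (fun ω => V ω = x) →
      chiSqDiv (condDist p Y (fun ω => V ω = x)) (condDist p' Y' (fun ω => V' ω = x)) ≤ β ^ 2) :
    LcrossEntropy L b p Y V p' Y' V' ≤ LcondEntropy L p Y V + 2 * M * β := by
  have hw1 : ∑ x, pr p (fun ω => V ω = x) = 1 := sum_pr_fiber hsum V
  rw [LcrossEntropy, LcondEntropy]
  have hterm : ∀ x, pr p (fun ω => V ω = x) *
      expLoss L (condDist p Y (fun ω => V ω = x)) (b (condDist p' Y' (fun ω => V' ω = x)))
      ≤ pr p (fun ω => V ω = x) *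
        (Lentropy L (condDist p Y (fun ω => V ω = x)) + 2 * M * β) := by
    intro x
    rcases eq_or_lt_of_le (pr_nonneg hp (fun ω => V ω = x)) with h | h
    · rw [← h, zero_mul, zero_mul]
    · have hP0 := condDist_nonneg hp Y (fun ω => V ω = x)
      have hP1 := sum_condDist hp Y h
      have h' := hsupp x h
      have hQ0 := condDist_nonneg hp' Y' (fun ω => V' ω = x)
      have hQ1 := sum_condDist hp' Y' h'
      have hl1 : ∑ y, |condDist p Y (fun ω => V ω = x) y -
          condDist p' Y' (fun ω => V' ω = x) y| ≤ β := by
        refine (l1_le_sqrt_chiSq hQ0 (le_of_eq hQ1) (hac x h)).trans ?_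
        calc Real.sqrt _ ≤ Real.sqrt (β ^ 2) := Real.sqrt_le_sqrt (hchi x h)
          _ = β := Real.sqrt_sq hβ
      refine mul_le_mul_of_nonneg_left ?_ (le_of_lt h)
      refine (expLoss_b_le hL hb hP0 hP1 hQ0 hQ1).trans ?_
      have h2 : 2 * M * (∑ y, |condDist p Y (fun ω => V ω = x) y -
          condDist p' Y' (fun ω => V' ω = x) y|) ≤ 2 * M * β :=
        mul_le_mul_of_nonneg_left hl1 (by positivity)
      linarith
  calc ∑ x, pr p (fun ω => V ω = x) *
        expLoss L (condDist p Y (fun ω => V ω = x)) (b (condDist p' Y' (fun ω => V' ω = x)))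
      ≤ ∑ x, pr p (fun ω => V ω = x) *
        (Lentropy L (condDist p Y (fun ω => V ω = x)) + 2 * M * β) :=
        Finset.sum_le_sum fun x _ => hterm x
    _ = (∑ x, pr p (fun ω => V ω = x) * Lentropy L (condDist p Y (fun ω => V ω = x)))
        + (∑ x, pr p (fun ω => V ω = x)) * (2 * M * β) := by
        rw [Finset.sum_mul, ← Finset.sum_add_distrib]
        exact Finset.sum_congr rfl fun x _ => by ring
    _ = _ := by rw [hw1, one_mul]

lemma stepB {Ω Ω' 𝒳 𝒴 𝒜 : Type*} [Fintype Ω] [Fintype Ω'] [Fintype 𝒳] [Fintype 𝒴]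
    [Fintype 𝒜] [Nonempty 𝒜]
    (L : 𝒴 → 𝒜 → ℝ) (b : (𝒴 → ℝ) → 𝒜)
    {p : Ω → ℝ} (hp : ∀ ω, 0 ≤ p ω) (Y : Ω → 𝒴) (V : Ω → 𝒳)
    (p' : Ω' → ℝ) (Y' : Ω' → 𝒴) (V' : Ω' → 𝒳) :
    LcondEntropy L p Y V ≤ LcrossEntropy L b p Y V p' Y' V' := by
  rw [LcrossEntropy, LcondEntropy]
  exact Finset.sum_le_sum fun x _ =>
    mul_le_mul_of_nonneg_left (Lentropy_le_expLoss L _ _) (pr_nonneg hp _)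

lemma stepC {Ω 𝒳 𝒴 𝒜 : Type*} [Fintype Ω] [Fintype 𝒳] [Fintype 𝒴]
    [Fintype 𝒜] [Nonempty 𝒜]
    {L : 𝒴 → 𝒜 → ℝ} {M : ℝ} (hL : ∀ y a, |L y a| ≤ M) (hM : 0 ≤ M)
    {b : (𝒴 → ℝ) → 𝒜} (hb : IsBayesSelector L b)
    {p : Ω → ℝ} (hp : ∀ ω, 0 ≤ p ω) (hsum : ∑ ω, p ω = 1)
    (Y : Ω → 𝒴) (V Z : Ω → 𝒳)
    {ε : ℝ} (hε : 0 ≤ ε)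
    (hCMI : chiSqCMI p Y Z V ≤ ε ^ 2) :
    LcondEntropy L p Y V ≤ LcondEntropy L p Y Z + M * ε := by
  classical
  have hw : ∀ x, pr p (fun ω => V ω = x) = ∑ z, pr p (fun ω => V ω = x ∧ Z ω = z) :=
    fun x => pr_split _ Z
  -- Step (A): bound by double sum with actions from Z-cells
  have hA : LcondEntropy L p Y V ≤
      ∑ x, ∑ z, pr p (fun ω => V ω = x ∧ Z ω = z) *
        expLoss L (condDist p Y (fun ω => V ω = x))
          (b (condDist p Y (fun ω => Z ω = z))) := by
    rw [LcondEntropy]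
    refine Finset.sum_le_sum fun x _ => ?_
    rw [hw x, Finset.sum_mul]
    refine Finset.sum_le_sum fun z _ => ?_
    rw [mul_comm (pr p _), mul_comm (pr p _)]
    exact mul_le_mul_of_nonneg_right (Lentropy_le_expLoss L _ _) (pr_nonneg hp _)
  -- Step (B): replace conditional on V by conditional on (V,Z), paying error
  have hErr : ∀ x z, pr p (fun ω => V ω = x ∧ Z ω = z) *
        expLoss L (condDist p Y (fun ω => V ω = x))
          (b (condDist p Y (fun ω => Z ω = z)))
      ≤ pr p (fun ω => V ω = x ∧ Z ω = z) *
        expLoss L (condDist p Y (fun ω => V ω = x ∧ Z ω = z))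
          (b (condDist p Y (fun ω => Z ω = z)))
        + M * (pr p (fun ω => V ω = x ∧ Z ω = z) *
            Real.sqrt (chiSqDiv (condDist p Y (fun ω => V ω = x ∧ Z ω = z))
              (condDist p Y (fun ω => V ω = x)))) := by
    intro x z
    rcases eq_or_lt_of_le (pr_nonneg hp (fun ω => V ω = x ∧ Z ω = z)) with h | h
    · rw [← h, zero_mul, zero_mul]; simp
    · have hacRP : ∀ y, condDist p Y (fun ω => V ω = x) y = 0 →
          condDist p Y (fun ω => V ω = x ∧ Z ω = z) y = 0 := by
        intro y hy
        have h0 : pr p (fun ω => Y ω = y ∧ V ω = x) = 0 := by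
          have hc := condDist_mul_pr hp Y (fun ω => V ω = x) y
          rw [hy, zero_mul] at hc; exact hc.symm
        have h1 : pr p (fun ω => Y ω = y ∧ (V ω = x ∧ Z ω = z)) = 0 :=
          le_antisymm (h0 ▸ pr_mono hp fun ω hw => ⟨hw.1, hw.2.1⟩) (pr_nonneg hp _)
        rw [condDist, h1, zero_div]
      have hl1 : ∑ y, |condDist p Y (fun ω => V ω = x ∧ Z ω = z) y -
            condDist p Y (fun ω => V ω = x) y|
          ≤ Real.sqrt (chiSqDiv (condDist p Y (fun ω => V ω = x ∧ Z ω = z))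
              (condDist p Y (fun ω => V ω = x))) :=
        l1_le_sqrt_chiSq (condDist_nonneg hp Y _) (sum_condDist_le_one hp Y _) hacRP
      have hdiff : expLoss L (condDist p Y (fun ω => V ω = x))
            (b (condDist p Y (fun ω => Z ω = z)))
          - expLoss L (condDist p Y (fun ω => V ω = x ∧ Z ω = z))
            (b (condDist p Y (fun ω => Z ω = z)))
          ≤ M * Real.sqrt (chiSqDiv (condDist p Y (fun ω => V ω = x ∧ Z ω = z))
              (condDist p Y (fun ω => V ω = x))) := by
        refine (le_abs_self _).trans ((abs_expLoss_sub L hL _ _ _).trans ?_)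
        refine (mul_le_mul_of_nonneg_left ?_ hM)
        have e : ∑ y, |condDist p Y (fun ω => V ω = x) y -
              condDist p Y (fun ω => V ω = x ∧ Z ω = z) y|
            = ∑ y, |condDist p Y (fun ω => V ω = x ∧ Z ω = z) y -
              condDist p Y (fun ω => V ω = x) y| :=
          Finset.sum_congr rfl fun y _ => abs_sub_comm _ _
        rw [e]; exact hl1
      have h2 := mul_le_mul_of_nonneg_left hdiff (le_of_lt h)
      rw [mul_sub] at h2
      linarith
  -- Cauchy–Schwarz over pairs
  have hCS : ∑ x, ∑ z, pr p (fun ω => V ω = x ∧ Z ω = z) *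
        Real.sqrt (chiSqDiv (condDist p Y (fun ω => V ω = x ∧ Z ω = z))
          (condDist p Y (fun ω => V ω = x))) ≤ ε := by
    have hv0 : ∀ x z, (0:ℝ) ≤ pr p (fun ω => V ω = x ∧ Z ω = z) :=
      fun x z => pr_nonneg hp _
    have hc0 : ∀ x z, (0:ℝ) ≤ chiSqDiv (condDist p Y (fun ω => V ω = x ∧ Z ω = z))
        (condDist p Y (fun ω => V ω = x)) :=
      fun x z => chiSqDiv_nonneg (condDist_nonneg hp Y _)
    have e1 : ∀ x z, pr p (fun ω => V ω = x ∧ Z ω = z) *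
          Real.sqrt (chiSqDiv (condDist p Y (fun ω => V ω = x ∧ Z ω = z))
            (condDist p Y (fun ω => V ω = x)))
        = Real.sqrt (pr p (fun ω => V ω = x ∧ Z ω = z)) *
          Real.sqrt (pr p (fun ω => V ω = x ∧ Z ω = z) *
            chiSqDiv (condDist p Y (fun ω => V ω = x ∧ Z ω = z))
              (condDist p Y (fun ω => V ω = x))) := by
      intro x z
      rw [Real.sqrt_mul (hv0 x z), ← mul_assoc, Real.mul_self_sqrt (hv0 x z)]
    calc ∑ x, ∑ z, pr p (fun ω => V ω = x ∧ Z ω = z) *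
          Real.sqrt (chiSqDiv (condDist p Y (fun ω => V ω = x ∧ Z ω = z))
            (condDist p Y (fun ω => V ω = x)))
        = ∑ q : 𝒳 × 𝒳, Real.sqrt (pr p (fun ω => V ω = q.1 ∧ Z ω = q.2)) *
            Real.sqrt (pr p (fun ω => V ω = q.1 ∧ Z ω = q.2) *
              chiSqDiv (condDist p Y (fun ω => V ω = q.1 ∧ Z ω = q.2))
                (condDist p Y (fun ω => V ω = q.1))) := by
          rw [Fintype.sum_prod_type]
          exact Finset.sum_congr rfl fun x _ => Finset.sum_congr rfl fun z _ => e1 x z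
      _ ≤ Real.sqrt (∑ q : 𝒳 × 𝒳, pr p (fun ω => V ω = q.1 ∧ Z ω = q.2)) *
            Real.sqrt (∑ q : 𝒳 × 𝒳, pr p (fun ω => V ω = q.1 ∧ Z ω = q.2) *
              chiSqDiv (condDist p Y (fun ω => V ω = q.1 ∧ Z ω = q.2))
                (condDist p Y (fun ω => V ω = q.1))) :=
          Real.sum_sqrt_mul_sqrt_le _ (fun q => hv0 q.1 q.2)
            (fun q => mul_nonneg (hv0 q.1 q.2) (hc0 q.1 q.2))
      _ ≤ 1 * Real.sqrt (ε ^ 2) := by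
          refine mul_le_mul ?_ ?_ (Real.sqrt_nonneg _) zero_le_one
          · have : ∑ q : 𝒳 × 𝒳, pr p (fun ω => V ω = q.1 ∧ Z ω = q.2) = 1 := by
              rw [Fintype.sum_prod_type]
              rw [show ∑ x, ∑ z, pr p (fun ω => V ω = x ∧ Z ω = z)
                  = ∑ x, pr p (fun ω => V ω = x) from
                (Finset.sum_congr rfl fun x _ => (hw x).symm), sum_pr_fiber hsum V]
            rw [this, Real.sqrt_one]
          · refine Real.sqrt_le_sqrt ?_
            rw [Fintype.sum_prod_type]
            exact hCMI
      _ = ε := by rw [one_mul, Real.sqrt_sq hε]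
  -- Step (C): collapse the inner conditional to Z
  have hEq : ∑ x, ∑ z, pr p (fun ω => V ω = x ∧ Z ω = z) *
        expLoss L (condDist p Y (fun ω => V ω = x ∧ Z ω = z))
          (b (condDist p Y (fun ω => Z ω = z)))
      = ∑ z, pr p (fun ω => Z ω = z) *
        expLoss L (condDist p Y (fun ω => Z ω = z)) (b (condDist p Y (fun ω => Z ω = z))) := by
    rw [Finset.sum_comm]
    refine Finset.sum_congr rfl fun z _ => ?_
    simp only [expLoss, Finset.mul_sum]
    rw [Finset.sum_comm]
    refine Finset.sum_congr rfl fun y _ => ?_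
    have lhs : ∀ x, pr p (fun ω => V ω = x ∧ Z ω = z) *
          (condDist p Y (fun ω => V ω = x ∧ Z ω = z) y * L y (b (condDist p Y (fun ω => Z ω = z))))
        = pr p (fun ω => Y ω = y ∧ (V ω = x ∧ Z ω = z)) *
            L y (b (condDist p Y (fun ω => Z ω = z))) := by
      intro x
      rw [← condDist_mul_pr hp Y (fun ω => V ω = x ∧ Z ω = z) y]
      ring
    rw [Finset.sum_congr rfl fun x _ => lhs x, ← Finset.sum_mul]
    have hsplit : ∑ x, pr p (fun ω => Y ω = y ∧ (V ω = x ∧ Z ω = z))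
        = pr p (fun ω => Y ω = y ∧ Z ω = z) := by
      rw [pr_split (fun ω => Y ω = y ∧ Z ω = z) V]
      exact Finset.sum_congr rfl fun x _ => pr_congr fun ω => by tauto
    rw [hsplit, ← condDist_mul_pr hp Y (fun ω => Z ω = z) y]
    ring
  -- Step (D): Bayes optimality on Z-cells
  have hD : ∑ z, pr p (fun ω => Z ω = z) *
        expLoss L (condDist p Y (fun ω => Z ω = z)) (b (condDist p Y (fun ω => Z ω = z)))
      ≤ LcondEntropy L p Y Z := by
    rw [LcondEntropy]
    refine Finset.sum_le_sum fun z _ => ?_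
    rcases eq_or_lt_of_le (pr_nonneg hp (fun ω => Z ω = z)) with h | h
    · rw [← h, zero_mul, zero_mul]
    · exact mul_le_mul_of_nonneg_left
        (expLoss_bayes_le hb (condDist_nonneg hp Y _) (sum_condDist hp Y h)) (le_of_lt h)
  -- combine
  have hsumErr : ∑ x, ∑ z, pr p (fun ω => V ω = x ∧ Z ω = z) *
        expLoss L (condDist p Y (fun ω => V ω = x))
          (b (condDist p Y (fun ω => Z ω = z)))
      ≤ (∑ x, ∑ z, pr p (fun ω => V ω = x ∧ Z ω = z) *
          expLoss L (condDist p Y (fun ω => V ω = x ∧ Z ω = z))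
            (b (condDist p Y (fun ω => Z ω = z))))
        + M * (∑ x, ∑ z, pr p (fun ω => V ω = x ∧ Z ω = z) *
            Real.sqrt (chiSqDiv (condDist p Y (fun ω => V ω = x ∧ Z ω = z))
              (condDist p Y (fun ω => V ω = x)))) := by
    simp only [Finset.mul_sum, ← Finset.sum_add_distrib]
    exact Finset.sum_le_sum fun x _ => Finset.sum_le_sum fun z _ => hErr x z
  have hMCS : M * (∑ x, ∑ z, pr p (fun ω => V ω = x ∧ Z ω = z) *
        Real.sqrt (chiSqDiv (condDist p Y (fun ω => V ω = x ∧ Z ω = z))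
          (condDist p Y (fun ω => V ω = x)))) ≤ M * ε :=
    mul_le_mul_of_nonneg_left hCS hM
  linarith [hA, hsumErr, hEq ▸ hD]

end MAIN

/-- Theorem 3(b), quantitative version.  Under the ε-Markov
and β-closeness conditions, for all `0 ≤ δ₁ ≤ δ₂ ≤ n`,
`H_L(Y;Ỹ|X_{δ₁}) ≤ H_L(Y;Ỹ|X_{δ₂}) + 2Mβ + 2M(δ₂−δ₁)ε|𝒳|`. -/
theorem crossEntropy_epsMarkov_monotone {Ω Ω' 𝒳 𝒴 𝒜 : Type*} [Fintype Ω] [Fintype Ω']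
    [Fintype 𝒳] [Fintype 𝒴] [Fintype 𝒜] [Nonempty 𝒜]
    (L : 𝒴 → 𝒜 → ℝ) (M : ℝ) (hL : ∀ y a, |L y a| ≤ M)
    (b : (𝒴 → ℝ) → 𝒜) (hb : IsBayesSelector L b)
    (p : Ω → ℝ) (hp : ∀ ω, 0 ≤ p ω) (hsum : ∑ ω, p ω = 1)
    (Y : Ω → 𝒴) (X : ℕ → Ω → 𝒳)
    (p' : Ω' → ℝ) (hp' : ∀ ω, 0 ≤ p' ω) (hsum' : ∑ ω, p' ω = 1)
    (Y' : Ω' → 𝒴) (X' : ℕ → Ω' → 𝒳)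
    (n : ℕ) (ε β : ℝ) (hε : 0 ≤ ε) (hβ : 0 ≤ β)
    (hMarkov : ∀ k < n, chiSqCMI p Y (X (k + 1)) (X k) ≤ ε ^ 2)
    (hsupp : ∀ δ ≤ n, ∀ x, 0 < pr p (fun ω => X δ ω = x) →
      0 < pr p' (fun ω => X' δ ω = x))
    (hac : ∀ δ ≤ n, ∀ x, 0 < pr p (fun ω => X δ ω = x) → ∀ y,
      condDist p' Y' (fun ω => X' δ ω = x) y = 0 →
        condDist p Y (fun ω => X δ ω = x) y = 0)
    (hchi : ∀ δ ≤ n, ∀ x, 0 < pr p (fun ω => X δ ω = x) →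
      chiSqDiv (condDist p Y (fun ω => X δ ω = x))
        (condDist p' Y' (fun ω => X' δ ω = x)) ≤ β ^ 2)
    (δ₁ δ₂ : ℕ) (h₁₂ : δ₁ ≤ δ₂) (h₂ : δ₂ ≤ n) :
    LcrossEntropy L b p Y (X δ₁) p' Y' (X' δ₁)
      ≤ LcrossEntropy L b p Y (X δ₂) p' Y' (X' δ₂)
        + 2 * M * β
        + 2 * M * ((δ₂ : ℝ) - (δ₁ : ℝ)) * ε * (Fintype.card 𝒳 : ℝ) := by
  have hΩ : Nonempty Ω := by
    by_contra h
    rw [not_nonempty_iff] at h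
    rw [Finset.univ_eq_empty, Finset.sum_empty] at hsum
    exact one_ne_zero hsum.symm
  obtain ⟨ω₀⟩ := hΩ
  have hM : 0 ≤ M := (abs_nonneg _).trans (hL (Y ω₀) (Classical.arbitrary 𝒜))
  have hX : Nonempty 𝒳 := ⟨X 0 ω₀⟩
  have hcard : (1 : ℝ) ≤ (Fintype.card 𝒳 : ℝ) :=
    Nat.one_le_cast.mpr Fintype.card_pos
  have hMε : 0 ≤ M * ε := mul_nonneg hM hε
  have key : ∀ d : ℕ, ∀ δ : ℕ, δ + d ≤ n →
      LcondEntropy L p Y (X δ) ≤ LcondEntropy L p Y (X (δ + d))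
        + 2 * M * ε * (Fintype.card 𝒳 : ℝ) * d := by
    intro d
    induction d with
    | zero => intro δ _; simp
    | succ d ih =>
      intro δ h
      have h1 : δ < n := by omega
      have step := stepC hL hM hb hp hsum Y (X δ) (X (δ + 1)) hε (hMarkov δ h1)
      have h2 := ih (δ + 1) (by omega)
      have hstep2 : M * ε ≤ 2 * M * ε * (Fintype.card 𝒳 : ℝ) := by
        have h3 : M * ε * 1 ≤ M * ε * (Fintype.card 𝒳 : ℝ) :=
          mul_le_mul_of_nonneg_left hcard hMε
        nlinarith
      have he : δ + 1 + d = δ + (d + 1) := by omega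
      rw [he] at h2
      push_cast
      linarith
  obtain ⟨d, rfl⟩ : ∃ d, δ₂ = δ₁ + d := ⟨δ₂ - δ₁, by omega⟩
  have hk := key d δ₁ h₂
  have hδ₁n : δ₁ ≤ n := by omega
  have hA1 := stepA hL hM hb hp hsum Y (X δ₁) hp' Y' (X' δ₁) hβ
    (hsupp δ₁ hδ₁n) (hac δ₁ hδ₁n) (hchi δ₁ hδ₁n)
  have hB2 := stepB L b hp Y (X (δ₁ + d)) p' Y' (X' (δ₁ + d))
  push_cast
  linarith
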